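/- For all integers n ≥ R ≥ 2 one has ∫_{Λ_n} q(‖x‖ − R)² dx ≤ 8(R+3)² + 8R·Q(n−R), where the integral is with respect to Lebesgue measure on ℝ². -/

import Mathlib

/-- `q(s) = 1` for `s ≤ 2`, and `q(s) = 1/(s·log s)` for `s > 2`. -/
noncomputable def q (s : ℝ) : ℝ := if s ≤ 2 then 1 else 1 / (s * Real.log s)

/-- `Q(k) = ∫_0^k q(s) ds`. -/
noncomputable def Q (k : ℝ) : ℝ := ∫ s in (0:ℝ)..k, q s

/-- The square `Λ_n = [-n, n)² ⊆ ℝ²`. -/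
def Lambda (n : ℤ) : Set (Fin 2 → ℝ) :=
  Set.pi Set.univ (fun _ => Set.Ico (-(n : ℝ)) (n : ℝ))

/-!
In the maximum norm the level set `‖x‖ = t` of the square has length `8t`; splitting the
square along its diagonals and using the swap and sign symmetries gives
`∫_{Λ_n} f(‖x‖) dx ≤ 8 ∫_0^n t f(t) dt`. For `f(t) = q(t - R)²` the integrand `t q(t - R)²` is at
most `R + 3` on `[0, R + 3]`, and beyond that `log (t - R) ≥ 1` gives `t q(t - R) ≤ R`, so
`t q(t - R)² ≤ R q(t - R)`, whose integral is at most `R Q(n - R)`.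
-/

open MeasureTheory Set
open scoped ENNReal

lemma q_nonneg (s : ℝ) : 0 ≤ q s := by
  unfold q
  split_ifs with h
  · exact zero_le_one
  · push Not at h
    exact one_div_nonneg.2 (mul_nonneg (by linarith) (Real.log_nonneg (by linarith)))

lemma q_le_one (s : ℝ) : q s ≤ 1 := by
  unfold q
  split_ifs with h
  · exact le_rfl
  · push Not at h
    have hlog : Real.log 2 ≤ Real.log s := Real.log_le_log two_pos h.le
    have := Real.log_two_gt_d9
    rw [div_le_one (by nlinarith)]
    nlinarith

lemma abs_q_le_one (s : ℝ) : |q s| ≤ 1 := by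
  rw [abs_of_nonneg (q_nonneg s)]
  exact q_le_one s

@[fun_prop]
lemma measurable_q : Measurable q :=
  Measurable.ite measurableSet_Iic measurable_const (by fun_prop)

lemma integral_q_nonneg {a b : ℝ} (hab : a ≤ b) : 0 ≤ ∫ s in a..b, q s :=
  intervalIntegral.integral_nonneg hab fun s _ => q_nonneg s

lemma add_mul_q_le {R s : ℝ} (hR : 2 ≤ R) (hs : 3 ≤ s) : (s + R) * q s ≤ R := by
  have hlog : 1 ≤ Real.log s := by
    rw [Real.le_log_iff_exp_le (by linarith)]
    linarith [Real.exp_one_lt_d9]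
  rw [q, if_neg (by linarith), mul_one_div, div_le_iff₀ (by nlinarith)]
  nlinarith [mul_le_mul_of_nonneg_left hlog (by nlinarith : 0 ≤ R * s)]

lemma intervalIntegrable_of_abs_le {f : ℝ → ℝ} (hf : Measurable f) {C : ℝ}
    (hC : ∀ x, |f x| ≤ C) (a b : ℝ) : IntervalIntegrable f volume a b :=
  (intervalIntegrable_const (c := C)).mono_fun hf.aestronglyMeasurable <|
    ae_of_all _ fun x => by simpa using (hC x).trans (le_abs_self C)

lemma intervalIntegrable_q_comp_sub (R a b : ℝ) :
    IntervalIntegrable (fun t => q (t - R)) volume a b :=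
  intervalIntegrable_of_abs_le (by fun_prop) (fun t => abs_q_le_one (t - R)) a b

lemma intervalIntegrable_mul_q_sq (R a b : ℝ) :
    IntervalIntegrable (fun t => t * q (t - R) ^ 2) volume a b := by
  have hq : IntervalIntegrable (fun t => q (t - R) ^ 2) volume a b :=
    intervalIntegrable_of_abs_le (C := 1) (by fun_prop)
      (fun t => by rw [abs_pow]; exact pow_le_one₀ (abs_nonneg _) (abs_q_le_one (t - R))) a b
  exact hq.continuousOn_mul continuousOn_id

lemma integral_mul_q_sq_le {R m : ℝ} (hR : 2 ≤ R) (hm : R ≤ m) :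
    ∫ t in (0:ℝ)..m, t * q (t - R) ^ 2 ≤ (R + 3) ^ 2 + R * Q (m - R) := by
  -- splitting at `min m (R + 3)` rather than at `R + 3` also covers `m < R + 3`
  set c := min m (R + 3)
  have hRc : R ≤ c := le_min hm (by linarith)
  have hcm : c ≤ m := min_le_left _ _
  have hcR : c ≤ R + 3 := min_le_right _ _
  have hinner : ∫ t in (0:ℝ)..c, t * q (t - R) ^ 2 ≤ (R + 3) ^ 2 := calc
    _ ≤ ∫ t in (0:ℝ)..c, (R + 3) := by
      refine intervalIntegral.integral_mono_on (by linarith) (intervalIntegrable_mul_q_sq _ _ _)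
        intervalIntegrable_const fun t ht => ?_
      have hq2 : q (t - R) ^ 2 ≤ 1 := pow_le_one₀ (q_nonneg _) (q_le_one _)
      nlinarith [ht.1, ht.2]
    _ ≤ (R + 3) ^ 2 := by
      rw [intervalIntegral.integral_const, smul_eq_mul]
      nlinarith
  have houter : ∫ t in c..m, t * q (t - R) ^ 2 ≤ R * Q (m - R) := calc
    _ ≤ ∫ t in c..m, R * q (t - R) := by
      refine intervalIntegral.integral_mono_on_of_le_Ioo hcm (intervalIntegrable_mul_q_sq _ _ _)
        ((intervalIntegrable_q_comp_sub _ _ _).const_mul R) fun t ht => ?_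
      have ht3 : R + 3 ≤ t := by
        by_contra! h
        exact (lt_min ht.2 h).not_ge ht.1.le
      have key := add_mul_q_le hR (by linarith : 3 ≤ t - R)
      have hq := q_nonneg (t - R)
      calc t * q (t - R) ^ 2 = (t - R + R) * q (t - R) * q (t - R) := by ring
        _ ≤ R * q (t - R) := mul_le_mul_of_nonneg_right key hq
    _ = R * ∫ s in c - R..m - R, q s := by
      rw [intervalIntegral.integral_const_mul, intervalIntegral.integral_comp_sub_right]
    _ ≤ R * Q (m - R) := by
      rw [Q, ← intervalIntegral.integral_add_adjacent_intervals (a := 0) (b := c - R)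
        (intervalIntegrable_of_abs_le measurable_q abs_q_le_one _ _)
        (intervalIntegrable_of_abs_le measurable_q abs_q_le_one _ _)]
      have := integral_q_nonneg (by linarith : (0:ℝ) ≤ c - R)
      nlinarith
  rw [← intervalIntegral.integral_add_adjacent_intervals (a := 0) (b := c)
    (intervalIntegrable_mul_q_sq _ _ _) (intervalIntegrable_mul_q_sq _ _ _)]
  linarith

lemma norm_fin_two_eq_max_abs (x : Fin 2 → ℝ) : ‖x‖ = max |x 0| |x 1| :=
  le_antisymm
    ((pi_norm_le_iff_of_nonneg (by positivity)).2 <|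
      Fin.forall_fin_two.2 ⟨le_max_left _ _, le_max_right _ _⟩)
    (max_le (norm_le_pi_norm x 0) (norm_le_pi_norm x 1))

lemma lintegral_prod_comp_max_abs_le {f : ℝ → ℝ≥0∞} (hf : Measurable f) (μ : Measure ℝ)
    [SFinite μ] :
    ∫⁻ p, f (max |p.1| |p.2|) ∂μ.prod μ ≤ 2 * ∫⁻ a, f |a| * μ (Icc (-|a|) |a|) ∂μ := by
  set D : Set (ℝ × ℝ) := {p | |p.2| ≤ |p.1|}
  have hD : MeasurableSet D := measurableSet_le (by fun_prop) (by fun_prop)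
  set g : ℝ × ℝ → ℝ≥0∞ := D.indicator fun p => f |p.1|
  have hg : Measurable g := (hf.comp (by fun_prop)).indicator hD
  have hsplit (p : ℝ × ℝ) : f (max |p.1| |p.2|) ≤ g p + g p.swap := by
    rcases le_total |p.2| |p.1| with h | h <;> simp [g, D, h]
  have hslice (a : ℝ) : ∫⁻ b, g (a, b) ∂μ = f |a| * μ (Icc (-|a|) |a|) := by
    rw [← lintegral_indicator_const measurableSet_Icc]
    congr 1 with b
    simp [g, D, Set.indicator, abs_le]
  calc ∫⁻ p, f (max |p.1| |p.2|) ∂μ.prod μ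
      ≤ ∫⁻ p, (g p + g p.swap) ∂μ.prod μ := lintegral_mono hsplit
    _ = 2 * ∫⁻ p, g p ∂μ.prod μ := by
      rw [lintegral_add_left hg, lintegral_prod_swap, two_mul]
    _ = 2 * ∫⁻ a, f |a| * μ (Icc (-|a|) |a|) ∂μ := by
      rw [lintegral_prod _ hg.aemeasurable]
      simp_rw [hslice]

lemma lintegral_Icc_comp_abs_le (g : ℝ → ℝ≥0∞) (m : ℝ) :
    ∫⁻ a in Icc (-m) m, g |a| ≤ 2 * ∫⁻ t in Icc 0 m, g t := by
  have hpos : ∫⁻ a in Icc 0 m, g |a| = ∫⁻ t in Icc 0 m, g t :=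
    setLIntegral_congr_fun measurableSet_Icc fun a ha => by rw [abs_of_nonneg ha.1]
  have hneg : ∫⁻ a in Icc (-m) 0, g |a| = ∫⁻ t in Icc 0 m, g t := by
    rw [← hpos, ← (Measure.measurePreserving_neg volume).setLIntegral_comp_preimage_emb
      (Homeomorph.neg ℝ).measurableEmbedding]
    simp
  calc ∫⁻ a in Icc (-m) m, g |a|
      ≤ ∫⁻ a in Icc (-m) 0 ∪ Icc 0 m, g |a| := lintegral_mono_set fun a ha => by
        rcases le_total a 0 with h | h
        exacts [Or.inl ⟨ha.1, h⟩, Or.inr ⟨h, ha.2⟩]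
    _ ≤ (∫⁻ a in Icc (-m) 0, g |a|) + ∫⁻ a in Icc 0 m, g |a| := lintegral_union_le _ _ _
    _ = 2 * ∫⁻ t in Icc 0 m, g t := by rw [hneg, hpos, two_mul]

lemma lintegral_pi_Ico_comp_norm_le {f : ℝ → ℝ≥0∞} (hf : Measurable f) (m : ℝ) :
    ∫⁻ x in univ.pi fun _ : Fin 2 => Ico (-m) m, f ‖x‖
      ≤ 8 * ∫⁻ t in Icc 0 m, ENNReal.ofReal t * f t := by
  set μ := volume.restrict (Ico (-m) m)
  have hslice (a : ℝ) : μ (Icc (-|a|) |a|) ≤ 2 * ENNReal.ofReal |a| := calc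
    μ (Icc (-|a|) |a|) ≤ volume (Icc (-|a|) |a|) := Measure.restrict_apply_le _ _
    _ = 2 * ENNReal.ofReal |a| := by
      rw [Real.volume_Icc, sub_neg_eq_add, ← two_mul, ENNReal.ofReal_mul zero_le_two,
        ENNReal.ofReal_ofNat]
  calc ∫⁻ x in univ.pi fun _ : Fin 2 => Ico (-m) m, f ‖x‖
      = ∫⁻ p, f (max |p.1| |p.2|) ∂μ.prod μ := by
        rw [volume_pi, Measure.restrict_pi_pi,
          MeasurePreserving.lintegral_map_equiv _ _ (measurePreserving_finTwoArrow μ)]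
        simp [norm_fin_two_eq_max_abs, μ]
    _ ≤ 2 * ∫⁻ a, f |a| * μ (Icc (-|a|) |a|) ∂μ := lintegral_prod_comp_max_abs_le hf μ
    _ ≤ 2 * ∫⁻ a, f |a| * (2 * ENNReal.ofReal |a|) ∂μ := by gcongr with a; exact hslice a
    _ = 4 * ∫⁻ a in Ico (-m) m, ENNReal.ofReal |a| * f |a| := by
      simp_rw [mul_left_comm (f _), lintegral_const_mul' 2 _ ENNReal.ofNat_ne_top, ← mul_assoc,
        mul_comm (f _)]
      norm_num [μ]
    _ ≤ 4 * ∫⁻ a in Icc (-m) m, ENNReal.ofReal |a| * f |a| := by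
      gcongr; exact Ico_subset_Icc_self
    _ ≤ 4 * (2 * ∫⁻ t in Icc 0 m, ENNReal.ofReal t * f t) := by
      gcongr; exact lintegral_Icc_comp_abs_le (fun t => ENNReal.ofReal t * f t) m
    _ = 8 * ∫⁻ t in Icc 0 m, ENNReal.ofReal t * f t := by rw [← mul_assoc]; norm_num

lemma lintegral_Icc_mul_q_sq_le {R m : ℝ} (hR : 2 ≤ R) (hm : R ≤ m) :
    ∫⁻ t in Icc 0 m, ENNReal.ofReal t * ENNReal.ofReal (q (t - R) ^ 2)
      ≤ ENNReal.ofReal ((R + 3) ^ 2 + R * Q (m - R)) := by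
  have hm0 : 0 ≤ m := by linarith
  calc ∫⁻ t in Icc 0 m, ENNReal.ofReal t * ENNReal.ofReal (q (t - R) ^ 2)
      = ∫⁻ t in Icc 0 m, ENNReal.ofReal (t * q (t - R) ^ 2) :=
        setLIntegral_congr_fun measurableSet_Icc fun t ht => (ENNReal.ofReal_mul ht.1).symm
    _ = ENNReal.ofReal (∫ t in (0:ℝ)..m, t * q (t - R) ^ 2) := by
      rw [intervalIntegral.integral_of_le hm0, ← integral_Icc_eq_integral_Ioc,
        ofReal_integral_eq_lintegral_ofReal]
      · exact (intervalIntegrable_iff_integrableOn_Icc_of_le hm0).1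
          (intervalIntegrable_mul_q_sq _ _ _)
      · exact ae_restrict_of_forall_mem measurableSet_Icc fun t ht =>
          mul_nonneg ht.1 (sq_nonneg _)
    _ ≤ ENNReal.ofReal ((R + 3) ^ 2 + R * Q (m - R)) :=
      ENNReal.ofReal_le_ofReal (integral_mul_q_sq_le hR hm)

/-- For all integers `n ≥ R ≥ 2`, `∫_{Λ_n} q(‖x‖ - R)² dx ≤ 8(R+3)² + 8R·Q(n-R)`,
where `‖·‖` is the maximum norm on `ℝ²` and the integral is with respect to Lebesgue
measure. -/
theorem stmt_6 (R n : ℤ) (hR : 2 ≤ R) (hn : R ≤ n) :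
    ∫ x in Lambda n, q (‖x‖ - (R : ℝ)) ^ 2 ≤
      8 * ((R : ℝ) + 3) ^ 2 + 8 * (R : ℝ) * Q ((n : ℝ) - (R : ℝ)) := by
  have hR' : (2 : ℝ) ≤ R := by exact_mod_cast hR
  have hn' : (R : ℝ) ≤ n := by exact_mod_cast hn
  have hQ : 0 ≤ Q (n - R) := integral_q_nonneg (by linarith)
  rw [integral_eq_lintegral_of_nonneg_ae (ae_of_all _ fun x => sq_nonneg _)
    (by fun_prop : Measurable fun x : Fin 2 → ℝ => q (‖x‖ - R) ^ 2).aestronglyMeasurable]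
  refine ENNReal.toReal_le_of_le_ofReal
    (add_nonneg (by positivity) (mul_nonneg (by linarith) hQ)) ?_
  calc ∫⁻ x in Lambda n, ENNReal.ofReal (q (‖x‖ - R) ^ 2)
      ≤ 8 * ∫⁻ t in Icc 0 (n : ℝ), ENNReal.ofReal t * ENNReal.ofReal (q (t - R) ^ 2) :=
        lintegral_pi_Ico_comp_norm_le (by fun_prop) n
    _ ≤ 8 * ENNReal.ofReal ((R + 3) ^ 2 + R * Q (n - R)) := by
      gcongr
      exact lintegral_Icc_mul_q_sq_le hR' hn'
    _ = ENNReal.ofReal (8 * (R + 3) ^ 2 + 8 * R * Q (n - R)) := by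
      rw [← ENNReal.ofReal_ofNat 8, ← ENNReal.ofReal_mul (by norm_num)]
      ring_nf
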